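/- arXiv:math/0304155 — 2 statements merged into one kernel-verified Lean document; each statement's English description precedes it below -/
import Mathlib

section
/- For all complex numbers a, c, q with c ≠ 0, setting b = c², for every n ≥ 1 the renormalized Al-Salam–Chihara polynomial satisfies p_n(x|q,a,b) = Σ_{k=1}^{n} [n choose k]_q · c^{n−k} · B_{n−k}(a/c|q) · ( H_k(x|q) − c^k · H_k(a/c|q) ), as an identity of polynomials in x. -/
open Polynomial Finset

noncomputable section

/-- The `q`-integer `[n]_q = 1 + q + ⋯ + q^{n-1}`. -/
def qInt (q : ℂ) (n : ℕ) : ℂ := ∑ i ∈ Finset.range n, q ^ i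

/-- The Gaussian (`q`-)binomial coefficient `[n choose k]_q`, defined via the `q`-Pascal
rule; it is a polynomial in `q` and agrees with `[n]_q!/([k]_q![n-k]_q!)` whenever the
latter quotient is well defined. -/
def qBinom (q : ℂ) : ℕ → ℕ → ℂ
  | _, 0 => 1
  | 0, _ + 1 => 0
  | n + 1, k + 1 => qBinom q n k + q ^ (k + 1) * qBinom q n (k + 1)

/-- The (renormalized) continuous `q`-Hermite polynomials:
`H_{-1} = 0`, `H_0 = 1`, `H_{n+1}(x) = x H_n(x) - [n]_q H_{n-1}(x)`. -/
def qHermite (q : ℂ) : ℕ → Polynomial ℂ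
  | 0 => 1
  | 1 => X
  | n + 2 => X * qHermite q (n + 1) - C (qInt q (n + 1)) * qHermite q n

/-- The polynomials `B_n(x|q)`:
`B_{-1} = 0`, `B_0 = 1`, `B_{n+1}(x) = -q^n x B_n(x) + q^{n-1} [n]_q B_{n-1}(x)`. -/
def Bpoly (q : ℂ) : ℕ → Polynomial ℂ
  | 0 => 1
  | 1 => -X
  | n + 2 => -(C (q ^ (n + 1)) * X) * Bpoly q (n + 1) + C (q ^ n * qInt q (n + 1)) * Bpoly q n

/-- The renormalized Al-Salam–Chihara polynomials:
`p_{-1} = 0`, `p_0 = 1`,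
`p_{n+1}(x) = (x - a q^n) p_n(x) - (1 - b q^{n-1}) [n]_q p_{n-1}(x)`. -/
def ascPoly (q a b : ℂ) : ℕ → Polynomial ℂ
  | 0 => 1
  | 1 => X - C a
  | n + 2 => (X - C (a * q ^ (n + 1))) * ascPoly q a b (n + 1)
      - C ((1 - b * q ^ n) * qInt q (n + 1)) * ascPoly q a b n

lemma qInt_zero (q : ℂ) : qInt q 0 = 0 := by simp [qInt]

lemma qInt_one (q : ℂ) : qInt q 1 = 1 := by simp [qInt]

lemma qInt_succ (q : ℂ) (n : ℕ) : qInt q (n+1) = qInt q n + q ^ n :=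
  Finset.sum_range_succ _ _

lemma qInt_add (q : ℂ) (m l : ℕ) : qInt q (m + l) = qInt q m + q ^ m * qInt q l := by
  induction l with
  | zero => simp [qInt_zero]
  | succ l ih => rw [← Nat.add_assoc, qInt_succ, ih, qInt_succ]; ring

lemma qBinom_zero (q : ℂ) (n : ℕ) : qBinom q n 0 = 1 := by cases n <;> rfl

lemma qBinom_pascal (q : ℂ) (n k : ℕ) :
    qBinom q (n+1) (k+1) = qBinom q n k + q ^ (k+1) * qBinom q n (k+1) := rfl

lemma qBinom_of_lt (q : ℂ) : ∀ n k : ℕ, n < k → qBinom q n k = 0 := by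
  intro n
  induction n with
  | zero =>
    intro k hk
    match k, hk with
    | k+1, _ => rfl
  | succ m ih =>
    intro k hk
    match k, hk with
    | k+1, hk =>
      rw [qBinom_pascal, ih k (by omega), ih (k+1) (by omega)]
      ring

lemma qBinom_self (q : ℂ) : ∀ n, qBinom q n n = 1 := by
  intro n
  induction n with
  | zero => rfl
  | succ m ih => rw [qBinom_pascal, ih, qBinom_of_lt q m (m+1) (by omega)]; ring

lemma qI2 (q : ℂ) : ∀ n k : ℕ,
    qInt q (n+1-k) * qBinom q (n+1) k = qInt q (n+1) * qBinom q n k := by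
  intro n
  induction n with
  | zero =>
    intro k
    match k with
    | 0 => simp [qBinom_zero]
    | 1 => simp [qBinom_pascal, qBinom_of_lt q 0 1 (by omega), qInt_zero, qBinom_self]
    | (k+2) => simp [qBinom_of_lt q 1 (k+2) (by omega), qBinom_of_lt q 0 (k+2) (by omega)]
  | succ m ih =>
    intro k
    match k with
    | 0 => simp [qBinom_zero]
    | j+1 =>
      rcases le_or_gt j m with hj | hj
      · obtain ⟨i, rfl⟩ : ∃ i, m = j + i := ⟨m - j, by omega⟩
        have A := ih j
        rw [show j + i + 1 - j = i + 1 by omega] at A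
        have B := ih (j+1)
        rw [show j + i + 1 - (j+1) = i by omega] at B
        have hP : qBinom q (j+i+1) (j+1)
            = qBinom q (j+i) j + q^(j+1) * qBinom q (j+i) (j+1) := rfl
        rw [show j + i + 1 + 1 - (j+1) = i + 1 by omega, qBinom_pascal,
          qInt_succ q (i), qInt_succ q (j+i+1)]
        rw [qInt_succ q (i)] at A
        linear_combination A + q^(j+1) * B - qInt q (j+i+1) * hP
      · rw [show m + 1 + 1 - (j+1) = 0 by omega, qInt_zero,
          qBinom_of_lt q (m+1) (j+1) (by omega)]
        ring

lemma qI1 (q : ℂ) : ∀ n k : ℕ,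
    qInt q (k+1) * qBinom q (n+1) (k+1) = qInt q (n+1) * qBinom q n k := by
  intro n
  induction n with
  | zero =>
    intro k
    match k with
    | 0 => simp [qBinom_pascal, qBinom_zero, qBinom_of_lt q 0 1 (by omega)]
    | k+1 => simp [qBinom_pascal, qBinom_of_lt q 0 (k+1) (by omega),
        qBinom_of_lt q 0 (k+2) (by omega)]
  | succ m ih =>
    intro k
    rcases le_or_gt k (m+1) with hk | hk
    · obtain ⟨i, hi⟩ : ∃ i, m + 1 = k + i := ⟨m+1-k, by omega⟩
      have A := ih k
      have B := qI2 q m k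
      rw [show m + 1 - k = i by omega] at B
      have S : qInt q (m+2) = qInt q (k+1) + q^(k+1) * qInt q i := by
        rw [show m + 2 = (k+1)+i by omega]; exact qInt_add q (k+1) i
      rw [qBinom_pascal q (m+1) k, S]
      linear_combination q^(k+1) * A - q^(k+1) * B
    · rw [qBinom_of_lt q (m+2) (k+1) (by omega), qBinom_of_lt q (m+1) k (by omega)]
      ring

lemma qBinom_one (q : ℂ) (n : ℕ) : qBinom q (n+1) 1 = qInt q (n+1) := by
  have := qI1 q n 0
  rw [qInt_one, qBinom_zero, one_mul, mul_one] at this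
  exact this

lemma X_mul_qHermite (q : ℂ) : ∀ k, X * qHermite q k
    = qHermite q (k+1) + C (qInt q k) * qHermite q (k-1) := by
  intro k
  match k with
  | 0 => simp [qHermite, qInt_zero]
  | k+1 =>
    have : qHermite q (k+2) = X * qHermite q (k+1) - C (qInt q (k+1)) * qHermite q k := rfl
    rw [Nat.add_sub_cancel, this]; ring

lemma ascPoly_eq_sum (q a b : ℂ) (β : ℕ → ℂ) (hβ0 : β 0 = 1) (hβ1 : β 1 = -a)
    (hβ : ∀ m, β (m+2) = -(a * q^(m+1)) * β (m+1) + b * q^m * qInt q (m+1) * β m) :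
    ∀ n, ascPoly q a b n
      = ∑ k ∈ Finset.range (n+1), C (qBinom q n k * β (n-k)) * qHermite q k := by
  have ext : ∀ n N : ℕ, n < N →
      (∑ k ∈ Finset.range (n+1), C (qBinom q n k * β (n-k)) * qHermite q k)
        = ∑ k ∈ Finset.range N, C (qBinom q n k * β (n-k)) * qHermite q k := by
    intro n N hN
    apply Finset.sum_subset (Finset.range_subset_range.mpr (by omega))
    intro k hk hks
    have hnk : n < k := by
      simp only [Finset.mem_range, not_lt] at hks; omega
    rw [qBinom_of_lt q n k hnk]
    simp
  suffices h : ∀ n, (ascPoly q a b n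
        = ∑ k ∈ Finset.range (n+1), C (qBinom q n k * β (n-k)) * qHermite q k)
      ∧ (ascPoly q a b (n+1)
        = ∑ k ∈ Finset.range (n+2), C (qBinom q (n+1) k * β (n+1-k)) * qHermite q k) by
    exact fun n => (h n).1
  intro n
  induction n with
  | zero =>
    constructor
    · simp [ascPoly, qHermite, Finset.sum_range_one, qBinom_zero, hβ0]
    · show ascPoly q a b 1 = ∑ k ∈ Finset.range 2, C (qBinom q 1 k * β (1-k)) * qHermite q k
      rw [Finset.sum_range_succ, Finset.sum_range_one]
      simp only [show qBinom q 1 0 = 1 from qBinom_zero q 1,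
        show qBinom q 1 1 = 1 from qBinom_self q 1, hβ0, hβ1]
      show X - C a = C (1 * -a) * 1 + C (1 * 1) * X
      simp only [one_mul, mul_one, map_one, map_neg]
      ring
  | succ m ih =>
    refine ⟨ih.2, ?_⟩
    show ascPoly q a b (m+2)
      = ∑ k ∈ Finset.range (m+3), C (qBinom q (m+2) k * β (m+2-k)) * qHermite q k
    have hdef : ascPoly q a b (m+2)
        = (X - C (a * q^(m+1))) * ascPoly q a b (m+1)
          - C ((1 - b * q^m) * qInt q (m+1)) * ascPoly q a b m := rfl
    have E0 : (∑ k ∈ Finset.range (m+1), C (qBinom q m k * β (m-k)) * qHermite q k)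
        = ∑ k ∈ Finset.range (m+4), C (qBinom q m k * β (m-k)) * qHermite q k :=
      ext m (m+4) (by omega)
    have E1 : (∑ k ∈ Finset.range (m+2), C (qBinom q (m+1) k * β (m+1-k)) * qHermite q k)
        = ∑ k ∈ Finset.range (m+4), C (qBinom q (m+1) k * β (m+1-k)) * qHermite q k :=
      ext (m+1) (m+4) (by omega)
    have E2 : (∑ k ∈ Finset.range (m+3), C (qBinom q (m+2) k * β (m+2-k)) * qHermite q k)
        = ∑ k ∈ Finset.range (m+4), C (qBinom q (m+2) k * β (m+2-k)) * qHermite q k :=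
      ext (m+2) (m+4) (by omega)
    rw [hdef, ih.1, ih.2, E0, E1, E2, sub_mul, Finset.mul_sum, Finset.mul_sum,
      Finset.mul_sum]
    have hXs : (∑ k ∈ Finset.range (m+4),
          X * (C (qBinom q (m+1) k * β (m+1-k)) * qHermite q k))
        = (∑ k ∈ Finset.range (m+4),
            C (qBinom q (m+1) k * β (m+1-k)) * qHermite q (k+1))
          + ∑ k ∈ Finset.range (m+4),
              C (qInt q k * (qBinom q (m+1) k * β (m+1-k))) * qHermite q (k-1) := by
      rw [← Finset.sum_add_distrib]
      refine Finset.sum_congr rfl fun k _ => ?_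
      have h := X_mul_qHermite q k
      calc X * (C (qBinom q (m+1) k * β (m+1-k)) * qHermite q k)
          = C (qBinom q (m+1) k * β (m+1-k)) * (X * qHermite q k) := by ring
        _ = _ := by rw [h]; simp only [map_mul]; ring
    have hA : (∑ k ∈ Finset.range (m+4),
          C (qBinom q (m+1) k * β (m+1-k)) * qHermite q (k+1))
        = ∑ k ∈ Finset.range (m+4), (if k = 0 then 0 else
            C (qBinom q (m+1) (k-1) * β (m+1-(k-1))) * qHermite q k) := by
      rw [Finset.sum_range_succ, qBinom_of_lt q (m+1) (m+3) (by omega),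
        Finset.sum_range_succ' (fun k => if k = 0 then 0 else
          C (qBinom q (m+1) (k-1) * β (m+1-(k-1))) * qHermite q k) (m+3)]
      simp
    have hB : (∑ k ∈ Finset.range (m+4),
          C (qInt q k * (qBinom q (m+1) k * β (m+1-k))) * qHermite q (k-1))
        = ∑ k ∈ Finset.range (m+4),
            C (qInt q (k+1) * (qBinom q (m+1) (k+1) * β (m+1-(k+1)))) * qHermite q k := by
      rw [Finset.sum_range_succ'
          (fun k => C (qInt q k * (qBinom q (m+1) k * β (m+1-k))) * qHermite q (k-1)) (m+3),
        Finset.sum_range_succ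
          (fun k => C (qInt q (k+1) * (qBinom q (m+1) (k+1) * β (m+1-(k+1)))) * qHermite q k)
          (m+3),
        qBinom_of_lt q (m+1) (m+3+1) (by omega), qInt_zero]
      simp
    rw [hXs, hA, hB, ← Finset.sum_add_distrib, ← Finset.sum_sub_distrib,
      ← Finset.sum_sub_distrib]
    refine Finset.sum_congr rfl fun k _ => ?_
    obtain _ | j := k
    · rw [if_pos rfl]
      have hs : qBinom q (m+2) 0 * β (m+2-0)
          = qInt q (0+1) * (qBinom q (m+1) (0+1) * β (m+1-(0+1)))
            - a * q^(m+1) * (qBinom q (m+1) 0 * β (m+1-0))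
            - (1 - b * q^m) * qInt q (m+1) * (qBinom q m 0 * β (m-0)) := by
        simp only [Nat.sub_zero, Nat.add_sub_cancel, show (0:ℕ)+1 = 1 from rfl]
        rw [qBinom_zero, qBinom_zero, qBinom_zero, qBinom_one, qInt_one]
        linear_combination hβ m
      have hs' := congrArg C hs
      simp only [map_mul, map_add, map_sub, map_one, map_pow] at hs' ⊢
      linear_combination (-qHermite q 0) * hs'
    · rw [if_neg (Nat.succ_ne_zero j)]
      simp only [Nat.add_sub_cancel]
      have hs : qBinom q (m+2) (j+1) * β (m+2-(j+1))
          = qBinom q (m+1) j * β (m+1-j)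
            + qInt q (j+1+1) * (qBinom q (m+1) (j+1+1) * β (m+1-(j+1+1)))
            - a * q^(m+1) * (qBinom q (m+1) (j+1) * β (m+1-(j+1)))
            - (1 - b * q^m) * qInt q (m+1) * (qBinom q m (j+1) * β (m-(j+1))) := by
        by_cases h1 : j + 1 ≤ m
        · obtain ⟨i, rfl⟩ : ∃ i, m = j + 1 + i := ⟨m - (j+1), by omega⟩
          rw [show j+1+i+2-(j+1) = i+2 by omega, show j+1+i+1-j = i+2 by omega,
            show j+1+i+1-(j+1+1) = i by omega, show j+1+i+1-(j+1) = i+1 by omega,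
            show j+1+i-(j+1) = i by omega,
            show j+1+i+2 = (j+1+i+1)+1 from rfl, qBinom_pascal q (j+1+i+1) j]
          have hI1 := qI1 q (j+1+i) (j+1)
          have hI2 := qI2 q (j+1+i) (j+1)
          rw [show j+1+i+1-(j+1) = i+1 by omega] at hI2
          linear_combination q^(j+1) * qBinom q (j+1+i+1) (j+1) * hβ i
            - β i * hI1 + b * q^(j+1+i) * β i * hI2
        · by_cases h2 : j = m
          · subst h2
            rw [show j+2-(j+1) = 1 by omega, show j+1-j = 1 by omega,
              show j+1-(j+1+1) = 0 by omega, show j+1-(j+1) = 0 by omega,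
              show j-(j+1) = 0 by omega,
              show j+2 = (j+1)+1 from rfl, qBinom_pascal q (j+1) j,
              qBinom_self q (j+1), qBinom_of_lt q (j+1) (j+1+1) (by omega),
              qBinom_of_lt q j (j+1) (by omega), hβ0, hβ1]
            ring
          · by_cases h3 : j = m + 1
            · subst h3
              rw [show m+1+1 = m+2 from rfl, show m+2-(m+2) = 0 by omega,
                show m+1-(m+1) = 0 by omega, qBinom_self q (m+2), qBinom_self q (m+1),
                qBinom_of_lt q (m+1) (m+2+1) (by omega),
                qBinom_of_lt q (m+1) (m+2) (by omega),
                qBinom_of_lt q m (m+2) (by omega)]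
              ring
            · rw [qBinom_of_lt q (m+2) (j+1) (by omega),
                qBinom_of_lt q (m+1) j (by omega),
                qBinom_of_lt q (m+1) (j+1+1) (by omega),
                qBinom_of_lt q (m+1) (j+1) (by omega),
                qBinom_of_lt q m (j+1) (by omega)]
              ring
      have hs' := congrArg C hs
      simp only [map_mul, map_add, map_sub, map_one, map_pow] at hs' ⊢
      linear_combination (-qHermite q (j+1)) * hs'

lemma ascPoly_diag (q y : ℂ) : ∀ n, (ascPoly q y 1 (n+1)).eval y = 0 := by
  suffices h : ∀ n, (ascPoly q y 1 (n+1)).eval y = 0 ∧ (ascPoly q y 1 (n+2)).eval y = 0 by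
    exact fun n => (h n).1
  intro n
  induction n with
  | zero =>
    constructor
    · simp [ascPoly]
    · have h2 : ascPoly q y 1 2 = (X - C (y * q ^ 1)) * ascPoly q y 1 1
          - C ((1 - 1 * q ^ 0) * qInt q 1) * ascPoly q y 1 0 := rfl
      rw [h2]
      simp [ascPoly]
  | succ m ih =>
    refine ⟨ih.2, ?_⟩
    have h3 : ascPoly q y 1 (m+3) = (X - C (y * q ^ (m+2))) * ascPoly q y 1 (m+2)
        - C ((1 - 1 * q ^ (m+1)) * qInt q (m+2)) * ascPoly q y 1 (m+1) := rfl
    rw [h3]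
    simp [ih.1, ih.2]

def betaC (q c y : ℂ) : ℕ → ℂ := fun m => c ^ m * (Bpoly q m).eval y

def betaD (q y : ℂ) : ℕ → ℂ := fun m => (Bpoly q m).eval y

/-- Theorem 1 (main identity): for all `a, c, q ∈ ℂ` with `c ≠ 0`, setting `b = c²`,
for every `n ≥ 1`,
`p_n(x|q,a,b) = Σ_{k=1}^n [n choose k]_q c^{n-k} B_{n-k}(a/c|q) (H_k(x|q) - c^k H_k(a/c|q))`,
as an identity of polynomials in `x`. -/
theorem asc_eq_sum_qHermite (a c q : ℂ) (hc : c ≠ 0) (b : ℂ) (hb : b = c ^ 2)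
    (n : ℕ) (hn : 1 ≤ n) :
    ascPoly q a b n =
      ∑ k ∈ Finset.Icc 1 n,
        C (qBinom q n k * c ^ (n - k) * (Bpoly q (n - k)).eval (a / c)) *
          (qHermite q k - C (c ^ k * (qHermite q k).eval (a / c))) := by
  set y := a / c with hy
  have hca : c * y = a := by rw [hy]; field_simp
  have hB1 : Bpoly q 1 = -X := rfl
  have hb0 : betaC q c y 0 = 1 := by simp [betaC, Bpoly]
  have hb1 : betaC q c y 1 = -a := by
    simp only [betaC, hB1, eval_neg, eval_X, pow_one]
    linear_combination -hca
  have hbrec : ∀ m, betaC q c y (m+2)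
      = -(a * q^(m+1)) * betaC q c y (m+1)
        + b * q^m * qInt q (m+1) * betaC q c y m := by
    intro m
    have hB2 : Bpoly q (m+2) = -(C (q ^ (m+1)) * X) * Bpoly q (m+1)
        + C (q ^ m * qInt q (m+1)) * Bpoly q m := rfl
    simp only [betaC, hB2, eval_add, eval_mul, eval_neg, eval_C, eval_X]
    rw [hb]
    linear_combination (-(q^(m+1) * c^(m+1) * (Bpoly q (m+1)).eval y)) * hca
  have hd0 : betaD q y 0 = 1 := by simp [betaD, Bpoly]
  have hd1 : betaD q y 1 = -y := by simp [betaD, hB1]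
  have hdrec : ∀ m, betaD q y (m+2)
      = -(y * q^(m+1)) * betaD q y (m+1)
        + 1 * q^m * qInt q (m+1) * betaD q y m := by
    intro m
    have hB2 : Bpoly q (m+2) = -(C (q ^ (m+1)) * X) * Bpoly q (m+1)
        + C (q ^ m * qInt q (m+1)) * Bpoly q m := rfl
    simp only [betaD, hB2, eval_add, eval_mul, eval_neg, eval_C, eval_X]
    ring
  have hmain := ascPoly_eq_sum q a b (betaC q c y) hb0 hb1 hbrec n
  have hdiag := ascPoly_eq_sum q y 1 (betaD q y) hd0 hd1 hdrec n
  have hsplit : Finset.range (n+1) = insert 0 (Finset.Icc 1 n) := by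
    ext x; simp only [Finset.mem_range, Finset.mem_insert, Finset.mem_Icc]; omega
  have hzero : ∑ k ∈ Finset.range (n+1),
      qBinom q n k * betaD q y (n-k) * (qHermite q k).eval y = 0 := by
    obtain ⟨n', rfl⟩ : ∃ n', n = n' + 1 := ⟨n - 1, by omega⟩
    have h0 := ascPoly_diag q y n'
    rw [hdiag] at h0
    simpa only [eval_finset_sum, eval_mul, eval_C] using h0
  have hIcc : ∑ k ∈ Finset.Icc 1 n,
      qBinom q n k * betaD q y (n-k) * (qHermite q k).eval y = -(betaD q y n) := by
    rw [hsplit, Finset.sum_insert (by simp)] at hzero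
    have hH0 : qHermite q 0 = 1 := rfl
    rw [qBinom_zero, Nat.sub_zero, hH0, eval_one, one_mul, mul_one] at hzero
    linear_combination hzero
  have hR : ∀ k ∈ Finset.Icc 1 n,
      C (qBinom q n k * c ^ (n - k) * (Bpoly q (n - k)).eval y) *
          (qHermite q k - C (c ^ k * (qHermite q k).eval y))
        = C (qBinom q n k * betaC q c y (n-k)) * qHermite q k
          - C (c^n * (qBinom q n k * betaD q y (n-k) * (qHermite q k).eval y)) := by
    intro k hk
    have hk' : k ≤ n := (Finset.mem_Icc.mp hk).2
    have hcc : c^(n-k) * c^k = c^n := by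
      rw [← pow_add]
      congr 1
      omega
    have hcc' := congrArg C hcc
    simp only [betaC, betaD, map_mul, map_sub, map_pow] at hcc' ⊢
    linear_combination (-(C (qBinom q n k) * C ((Bpoly q (n-k)).eval y)
      * C ((qHermite q k).eval y))) * hcc'
  rw [hmain, hsplit, Finset.sum_insert (by simp), Finset.sum_congr rfl hR,
    Finset.sum_sub_distrib, ← map_sum, ← Finset.mul_sum, hIcc]
  have hH0 : qHermite q 0 = 1 := rfl
  rw [qBinom_zero, Nat.sub_zero, hH0, one_mul, mul_one]
  simp only [betaC, betaD, map_mul, map_neg, map_pow]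
  ring
end
end

section
/- For all complex numbers a, c, q with c ≠ 0 and every n ≥ 0, p_n(x|q,a,c²) = Σ_{k=0}^{n} [n choose k]_q · c^{n−k} · B_{n−k}(a/c|q) · H_k(x|q), as an identity of polynomials in x. -/
open Polynomial Finset

noncomputable section

namespace AscAux

variable (q a c : ℂ)

lemma qInt_zero : qInt q 0 = 0 := by simp [qInt]

lemma qInt_one : qInt q 1 = 1 := by simp [qInt]

lemma qInt_succ (n : ℕ) : qInt q (n + 1) = qInt q n + q ^ n :=
  Finset.sum_range_succ _ _

lemma qInt_add (m n : ℕ) : qInt q (m + n) = qInt q m + q ^ m * qInt q n := by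
  induction n with
  | zero => simp [qInt_zero]
  | succ n ih =>
      rw [show m + (n + 1) = (m + n) + 1 from rfl, qInt_succ, ih, qInt_succ, pow_add]
      ring

lemma qBinom_zero_right (n : ℕ) : qBinom q n 0 = 1 := by cases n <;> rfl

lemma qBinom_succ_succ (n k : ℕ) :
    qBinom q (n + 1) (k + 1) = qBinom q n k + q ^ (k + 1) * qBinom q n (k + 1) := rfl

lemma qBinom_eq_zero : ∀ n k, n < k → qBinom q n k = 0 := by
  intro n
  induction n with
  | zero =>
      intro k hk
      cases k with
      | zero => omega
      | succ k => rfl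
  | succ n ih =>
      intro k hk
      cases k with
      | zero => omega
      | succ k => rw [qBinom_succ_succ, ih k (by omega), ih (k + 1) (by omega)]; ring

lemma qBinom_self : ∀ n, qBinom q n n = 1 := by
  intro n
  induction n with
  | zero => rfl
  | succ n ih => rw [qBinom_succ_succ, ih, qBinom_eq_zero q n (n + 1) (by omega)]; ring

lemma qBinom_one (n : ℕ) : qBinom q n 1 = qInt q n := by
  induction n with
  | zero => simp [qBinom, qInt_zero]
  | succ n ih =>
      rw [qBinom_succ_succ, qBinom_zero_right, ih,
        show n + 1 = 1 + n from by omega, qInt_add, qInt_one]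

end AscAux
namespace AscAux

variable (q a c : ℂ)

/-- Key identity: `[n-k]_q [n,k]_q = [k+1]_q [n,k+1]_q`. -/
lemma key3 : ∀ n k, qInt q (n - k) * qBinom q n k = qInt q (k + 1) * qBinom q n (k + 1) := by
  intro n
  induction n with
  | zero =>
      intro k
      cases k with
      | zero => simp [qBinom, qInt_zero]
      | succ k => simp [qBinom, qInt_zero]
  | succ n ih =>
      intro k
      cases k with
      | zero =>
          rw [qBinom_zero_right, qInt_one, qBinom_one]
          simp
      | succ j =>
          rcases Nat.lt_or_ge j n with h | h
          · obtain ⟨m, rfl⟩ : ∃ m, n = j + 1 + m := ⟨n - (j + 1), by omega⟩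
            have h1 := ih j
            have h2 := ih (j + 1)
            rw [show j + 1 + m - j = m + 1 from by omega] at h1
            rw [show j + 1 + m - (j + 1) = m from by omega] at h2
            rw [show j + 1 + m + 1 - (j + 1) = m + 1 from by omega,
              qBinom_succ_succ, qBinom_succ_succ]
            have e1 := qInt_add q (j + 1) (m + 1)
            have e2 := qInt_add q (j + 2) m
            rw [show j + 1 + (m + 1) = j + 1 + m + 1 from by omega] at e1
            rw [show j + 2 + m = j + 1 + m + 1 from by omega] at e2
            simp only [show j + 1 + 1 = j + 2 from rfl] at h1 h2 e1 e2 ⊢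
            linear_combination h1 + q ^ (j + 2) * h2 +
              qBinom q (j + 1 + m) (j + 1) * (e2 - e1)
          · have h1 : n + 1 - (j + 1) = 0 := by omega
            have h2 : qBinom q (n + 1) (j + 2) = 0 := qBinom_eq_zero q _ _ (by omega)
            rw [h1, h2, qInt_zero]
            ring

/-- Key identity: `[n+1]_q [n,k]_q = [n+1-k]_q [n+1,k]_q`. -/
lemma key1 : ∀ n k, qInt q (n + 1) * qBinom q n k = qInt q (n + 1 - k) * qBinom q (n + 1) k := by
  intro n k
  cases k with
  | zero => rw [qBinom_zero_right, qBinom_zero_right]; simp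
  | succ j =>
      rcases Nat.lt_or_ge n (j + 1) with h | h
      · rw [qBinom_eq_zero q n (j + 1) h, show n + 1 - (j + 1) = 0 from by omega, qInt_zero]
        ring
      · obtain ⟨m, rfl⟩ : ∃ m, n = j + 1 + m := ⟨n - (j + 1), by omega⟩
        have h3 := key3 q (j + 1 + m) j
        rw [show j + 1 + m - j = m + 1 from by omega] at h3
        rw [show j + 1 + m + 1 - (j + 1) = m + 1 from by omega, qBinom_succ_succ]
        have e1 := qInt_add q (j + 1) (m + 1)
        rw [show j + 1 + (m + 1) = j + 1 + m + 1 from by omega] at e1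
        linear_combination qBinom q (j + 1 + m) (j + 1) * e1 - h3

end AscAux
namespace AscAux

/-- `bB m = c^m B_m(a/c)`. -/
def bB (q a c : ℂ) (m : ℕ) : ℂ := c ^ m * (Bpoly q m).eval (a / c)

variable (q a c : ℂ)

lemma bB_zero : bB q a c 0 = 1 := by simp [bB, Bpoly]

lemma bB_one (hc : c ≠ 0) : bB q a c 1 = -a := by
  simp [bB, Bpoly]
  field_simp

lemma bB_rec (hc : c ≠ 0) (m : ℕ) :
    bB q a c (m + 2) = -(a * q ^ (m + 1)) * bB q a c (m + 1)
      + c ^ 2 * q ^ m * qInt q (m + 1) * bB q a c m := by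
  have hB : Bpoly q (m + 2) = -(C (q ^ (m + 1)) * X) * Bpoly q (m + 1)
      + C (q ^ m * qInt q (m + 1)) * Bpoly q m := rfl
  simp only [bB, hB, eval_add, eval_mul, eval_neg, eval_C, eval_X]
  have h1 : c ^ (m + 2) * (a / c) = a * c ^ (m + 1) := by
    field_simp; ring
  field_simp
  ring

lemma X_mul_qHermite : ∀ k, X * qHermite q k
    = qHermite q (k + 1) + C (qInt q k) * qHermite q (k - 1) := by
  intro k
  match k with
  | 0 => simp [qHermite, qInt_zero]
  | 1 =>
      have h : qHermite q 2 = X * qHermite q 1 - C (qInt q 1) * qHermite q 0 := rfl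
      rw [h]; simp [qHermite]
  | (k + 2) =>
      have h : qHermite q (k + 3) = X * qHermite q (k + 2) - C (qInt q (k + 2)) * qHermite q (k + 1) := rfl
      rw [h, show k + 2 - 1 = k + 1 from rfl]; ring

end AscAux
namespace AscAux

variable (q a c : ℂ)

lemma coeff_step (hc : c ≠ 0) (n k : ℕ) (hk : k ≤ n + 1) :
    qBinom q (n + 2) (k + 1) * bB q a c (n + 1 - k)
      = qBinom q (n + 1) k * bB q a c (n + 1 - k)
        + (qBinom q (n + 1) (k + 2) * bB q a c (n + 1 - (k + 2)) * qInt q (k + 2)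
          - a * q ^ (n + 1) * (qBinom q (n + 1) (k + 1) * bB q a c (n + 1 - (k + 1)))
          - (1 - c ^ 2 * q ^ n) * qInt q (n + 1)
              * (qBinom q n (k + 1) * bB q a c (n - (k + 1)))) := by
  have hP : qBinom q (n + 2) (k + 1)
      = qBinom q (n + 1) k + q ^ (k + 1) * qBinom q (n + 1) (k + 1) := rfl
  rw [hP]
  rcases Nat.lt_or_ge k n with h | h
  · obtain ⟨m, rfl⟩ : ∃ m, n = k + 1 + m := ⟨n - (k + 1), by omega⟩
    rw [show k + 1 + m + 1 - k = m + 2 from by omega,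
        show k + 1 + m + 1 - (k + 2) = m from by omega,
        show k + 1 + m + 1 - (k + 1) = m + 1 from by omega,
        show k + 1 + m - (k + 1) = m from by omega]
    have hb := bB_rec q a c hc m
    have h3 := key3 q (k + 1 + m + 1) (k + 1)
    rw [show k + 1 + m + 1 - (k + 1) = m + 1 from by omega] at h3
    have h1 := key1 q (k + 1 + m) (k + 1)
    rw [show k + 1 + m + 1 - (k + 1) = m + 1 from by omega] at h1
    simp only [show k + 1 + 1 = k + 2 from rfl] at h3 h1 ⊢
    linear_combination (q ^ (k + 1) * qBinom q (k + 1 + m + 1) (k + 1)) * hb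
      + bB q a c m * h3 + ((1 - c ^ 2 * q ^ (k + 1 + m)) * bB q a c m) * h1
  · rcases (show k = n ∨ k = n + 1 from by omega) with rfl | rfl
    · rw [show k + 1 - k = 1 from by omega,
          show k + 1 - (k + 2) = 0 from by omega,
          show k + 1 - (k + 1) = 0 from by omega,
          show k - (k + 1) = 0 from by omega,
          bB_one q a c hc, bB_zero,
          qBinom_eq_zero q (k + 1) (k + 2) (by omega),
          qBinom_eq_zero q k (k + 1) (by omega), qBinom_self]
      ring
    · have e0 : n + 1 - n = 1 := by omega
      rw [show n + 1 - (n + 1) = 0 from by omega,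
          show n + 1 - (n + 1 + 2) = 0 from by omega,
          show n + 1 - (n + 1 + 1) = 0 from by omega,
          show n - (n + 1 + 1) = 0 from by omega, bB_zero,
          qBinom_eq_zero q (n + 1) (n + 1 + 1) (by omega),
          qBinom_eq_zero q (n + 1) (n + 1 + 2) (by omega),
          qBinom_eq_zero q n (n + 1 + 1) (by omega)]
      ring

lemma coeff_zero (hc : c ≠ 0) (n : ℕ) :
    qBinom q (n + 2) 0 * bB q a c (n + 2)
      = qBinom q (n + 1) 1 * bB q a c (n + 1 - 1) * qInt q 1
        - a * q ^ (n + 1) * (qBinom q (n + 1) 0 * bB q a c (n + 1))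
        - (1 - c ^ 2 * q ^ n) * qInt q (n + 1) * (qBinom q n 0 * bB q a c n) := by
  rw [qBinom_zero_right, qBinom_zero_right, qBinom_zero_right, qBinom_one, qInt_one,
      show n + 1 - 1 = n from by omega, bB_rec q a c hc n]
  ring

end AscAux
namespace AscAux

variable (q a c : ℂ)

lemma step (hc : c ≠ 0) (n : ℕ)
    (ih0 : ascPoly q a (c ^ 2) n
      = ∑ k ∈ range (n + 1), C (qBinom q n k * bB q a c (n - k)) * qHermite q k)
    (ih1 : ascPoly q a (c ^ 2) (n + 1)
      = ∑ k ∈ range (n + 1 + 1), C (qBinom q (n + 1) k * bB q a c (n + 1 - k)) * qHermite q k) :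
    ascPoly q a (c ^ 2) (n + 2)
      = ∑ k ∈ range (n + 2 + 1), C (qBinom q (n + 2) k * bB q a c (n + 2 - k)) * qHermite q k := by
  have hasc : ascPoly q a (c ^ 2) (n + 2)
      = (X - C (a * q ^ (n + 1))) * ascPoly q a (c ^ 2) (n + 1)
        - C ((1 - c ^ 2 * q ^ n) * qInt q (n + 1)) * ascPoly q a (c ^ 2) n := rfl
  rw [hasc, ih0, ih1, sub_mul, Finset.mul_sum, Finset.mul_sum, Finset.mul_sum]
  have hX : ∀ k : ℕ, X * (C (qBinom q (n + 1) k * bB q a c (n + 1 - k)) * qHermite q k)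
      = C (qBinom q (n + 1) k * bB q a c (n + 1 - k)) * qHermite q (k + 1)
        + C (qBinom q (n + 1) k * bB q a c (n + 1 - k) * qInt q k) * qHermite q (k - 1) := by
    intro k
    rw [mul_left_comm, X_mul_qHermite q k]
    simp only [map_mul]
    ring
  have hE : ∀ k : ℕ, C (a * q ^ (n + 1)) * (C (qBinom q (n + 1) k * bB q a c (n + 1 - k)) * qHermite q k)
      = C (a * q ^ (n + 1) * (qBinom q (n + 1) k * bB q a c (n + 1 - k))) * qHermite q k := by
    intro k; simp only [map_mul]; ring
  have hU : ∀ k : ℕ, C ((1 - c ^ 2 * q ^ n) * qInt q (n + 1)) * (C (qBinom q n k * bB q a c (n - k)) * qHermite q k)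
      = C ((1 - c ^ 2 * q ^ n) * qInt q (n + 1) * (qBinom q n k * bB q a c (n - k))) * qHermite q k := by
    intro k; simp only [map_mul]; ring
  simp only [hX, hE, hU]
  rw [Finset.sum_add_distrib]
  have hB : ∑ k ∈ range (n + 1 + 1),
        C (qBinom q (n + 1) k * bB q a c (n + 1 - k) * qInt q k) * qHermite q (k - 1)
      = ∑ k ∈ range (n + 1 + 1),
        C (qBinom q (n + 1) (k + 1) * bB q a c (n + 1 - (k + 1)) * qInt q (k + 1)) * qHermite q k := by
    rw [Finset.sum_range_succ'
      (fun k => C (qBinom q (n + 1) k * bB q a c (n + 1 - k) * qInt q k) * qHermite q (k - 1)) (n + 1)]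
    rw [Finset.sum_range_succ
      (fun k => C (qBinom q (n + 1) (k + 1) * bB q a c (n + 1 - (k + 1)) * qInt q (k + 1)) * qHermite q k) (n + 1)]
    rw [qBinom_eq_zero q (n + 1) (n + 1 + 1) (by omega), qInt_zero]
    simp
  have hD : ∑ k ∈ range (n + 1),
        C ((1 - c ^ 2 * q ^ n) * qInt q (n + 1) * (qBinom q n k * bB q a c (n - k))) * qHermite q k
      = ∑ k ∈ range (n + 1 + 1),
        C ((1 - c ^ 2 * q ^ n) * qInt q (n + 1) * (qBinom q n k * bB q a c (n - k))) * qHermite q k := by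
    rw [Finset.sum_range_succ
      (fun k => C ((1 - c ^ 2 * q ^ n) * qInt q (n + 1) * (qBinom q n k * bB q a c (n - k))) * qHermite q k) (n + 1)]
    rw [qBinom_eq_zero q n (n + 1) (by omega)]
    simp
  rw [hB, hD]
  rw [show ∀ A B Cc D : Polynomial ℂ, A + B - Cc - D = A + (B - Cc - D) from
    fun A B Cc D => by ring]
  rw [← Finset.sum_sub_distrib, ← Finset.sum_sub_distrib]
  have hW : ∀ k : ℕ,
      C (qBinom q (n + 1) (k + 1) * bB q a c (n + 1 - (k + 1)) * qInt q (k + 1)) * qHermite q k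
        - C (a * q ^ (n + 1) * (qBinom q (n + 1) k * bB q a c (n + 1 - k))) * qHermite q k
        - C ((1 - c ^ 2 * q ^ n) * qInt q (n + 1) * (qBinom q n k * bB q a c (n - k))) * qHermite q k
      = C (qBinom q (n + 1) (k + 1) * bB q a c (n + 1 - (k + 1)) * qInt q (k + 1)
            - a * q ^ (n + 1) * (qBinom q (n + 1) k * bB q a c (n + 1 - k))
            - (1 - c ^ 2 * q ^ n) * qInt q (n + 1) * (qBinom q n k * bB q a c (n - k)))
          * qHermite q k := by
    intro k
    rw [map_sub, map_sub]
    ring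
  simp only [hW]
  rw [Finset.sum_range_succ'
    (fun k => C (qBinom q (n + 1) (k + 1) * bB q a c (n + 1 - (k + 1)) * qInt q (k + 1)
            - a * q ^ (n + 1) * (qBinom q (n + 1) k * bB q a c (n + 1 - k))
            - (1 - c ^ 2 * q ^ n) * qInt q (n + 1) * (qBinom q n k * bB q a c (n - k)))
          * qHermite q k) (n + 1)]
  rw [Finset.sum_range_succ'
    (fun k => C (qBinom q (n + 2) k * bB q a c (n + 2 - k)) * qHermite q k) (n + 2)]
  have hext : ∑ k ∈ range (n + 1),
        C (qBinom q (n + 1) (k + 1 + 1) * bB q a c (n + 1 - (k + 1 + 1)) * qInt q (k + 1 + 1)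
            - a * q ^ (n + 1) * (qBinom q (n + 1) (k + 1) * bB q a c (n + 1 - (k + 1)))
            - (1 - c ^ 2 * q ^ n) * qInt q (n + 1) * (qBinom q n (k + 1) * bB q a c (n - (k + 1))))
          * qHermite q (k + 1)
      = ∑ k ∈ range (n + 1 + 1),
        C (qBinom q (n + 1) (k + 1 + 1) * bB q a c (n + 1 - (k + 1 + 1)) * qInt q (k + 1 + 1)
            - a * q ^ (n + 1) * (qBinom q (n + 1) (k + 1) * bB q a c (n + 1 - (k + 1)))
            - (1 - c ^ 2 * q ^ n) * qInt q (n + 1) * (qBinom q n (k + 1) * bB q a c (n - (k + 1))))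
          * qHermite q (k + 1) := by
    rw [Finset.sum_range_succ
      (fun k => C (qBinom q (n + 1) (k + 1 + 1) * bB q a c (n + 1 - (k + 1 + 1)) * qInt q (k + 1 + 1)
            - a * q ^ (n + 1) * (qBinom q (n + 1) (k + 1) * bB q a c (n + 1 - (k + 1)))
            - (1 - c ^ 2 * q ^ n) * qInt q (n + 1) * (qBinom q n (k + 1) * bB q a c (n - (k + 1))))
          * qHermite q (k + 1)) (n + 1)]
    rw [qBinom_eq_zero q (n + 1) (n + 1 + 1 + 1) (by omega),
        qBinom_eq_zero q (n + 1) (n + 1 + 1) (by omega),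
        qBinom_eq_zero q n (n + 1 + 1) (by omega)]
    simp
  rw [hext]
  rw [show ∀ A B Cc : Polynomial ℂ, A + (B + Cc) = A + B + Cc from fun _ _ _ => by ring]
  rw [← Finset.sum_add_distrib]
  have hcongr : ∀ k ∈ range (n + 1 + 1),
      C (qBinom q (n + 1) k * bB q a c (n + 1 - k)) * qHermite q (k + 1)
        + C (qBinom q (n + 1) (k + 1 + 1) * bB q a c (n + 1 - (k + 1 + 1)) * qInt q (k + 1 + 1)
            - a * q ^ (n + 1) * (qBinom q (n + 1) (k + 1) * bB q a c (n + 1 - (k + 1)))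
            - (1 - c ^ 2 * q ^ n) * qInt q (n + 1) * (qBinom q n (k + 1) * bB q a c (n - (k + 1))))
          * qHermite q (k + 1)
      = C (qBinom q (n + 2) (k + 1) * bB q a c (n + 2 - (k + 1))) * qHermite q (k + 1) := by
    intro k hk
    rw [Finset.mem_range] at hk
    simp only [show k + 1 + 1 = k + 2 from rfl,
      show n + 2 - (k + 1) = n + 1 - k from by omega]
    rw [coeff_step q a c hc n k (by omega), map_add, add_mul]
  have hzero :
      C (qBinom q (n + 1) (0 + 1) * bB q a c (n + 1 - (0 + 1)) * qInt q (0 + 1)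
          - a * q ^ (n + 1) * (qBinom q (n + 1) 0 * bB q a c (n + 1 - 0))
          - (1 - c ^ 2 * q ^ n) * qInt q (n + 1) * (qBinom q n 0 * bB q a c (n - 0)))
        * qHermite q 0
      = C (qBinom q (n + 2) 0 * bB q a c (n + 2 - 0)) * qHermite q 0 := by
    simp only [Nat.sub_zero, show (0 : ℕ) + 1 = 1 from rfl]
    rw [coeff_zero q a c hc n]
  rw [hzero, Finset.sum_congr rfl hcongr]


end AscAux
namespace AscAux

variable (q a c : ℂ)

lemma base0 : ascPoly q a (c ^ 2) 0
    = ∑ k ∈ range (0 + 1), C (qBinom q 0 k * bB q a c (0 - k)) * qHermite q k := by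
  simp [ascPoly, qHermite, bB_zero, qBinom_zero_right]

lemma base1 (hc : c ≠ 0) : ascPoly q a (c ^ 2) 1
    = ∑ k ∈ range (1 + 1), C (qBinom q 1 k * bB q a c (1 - k)) * qHermite q k := by
  rw [Finset.sum_range_succ, Finset.sum_range_succ, Finset.sum_range_zero]
  rw [qBinom_zero_right, qBinom_self, bB_one q a c hc, bB_zero]
  have h1 : ascPoly q a (c ^ 2) 1 = X - C a := rfl
  have h2 : qHermite q 0 = 1 := rfl
  have h3 : qHermite q 1 = X := rfl
  rw [h1, h2, h3]
  simp
  ring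

lemma main (hc : c ≠ 0) : ∀ n, ascPoly q a (c ^ 2) n
    = ∑ k ∈ range (n + 1), C (qBinom q n k * bB q a c (n - k)) * qHermite q k := by
  have key : ∀ n, (ascPoly q a (c ^ 2) n
      = ∑ k ∈ range (n + 1), C (qBinom q n k * bB q a c (n - k)) * qHermite q k)
    ∧ (ascPoly q a (c ^ 2) (n + 1)
      = ∑ k ∈ range (n + 1 + 1), C (qBinom q (n + 1) k * bB q a c (n + 1 - k)) * qHermite q k) := by
    intro n
    induction n with
    | zero => exact ⟨base0 q a c, base1 q a c hc⟩
    | succ n ih => exact ⟨ih.2, step q a c hc n ih.1 ih.2⟩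
  exact fun n => (key n).1

end AscAux


/-- Identity (9): for all `a, c, q ∈ ℂ` with `c ≠ 0` and every `n ≥ 0`,
`p_n(x|q,a,c²) = Σ_{k=0}^n [n choose k]_q c^{n-k} B_{n-k}(a/c|q) H_k(x|q)`,
as an identity of polynomials in `x`. -/
theorem asc_eq_sum_B_mul_qHermite (a c q : ℂ) (hc : c ≠ 0) (n : ℕ) :
    ascPoly q a (c ^ 2) n =
      ∑ k ∈ Finset.range (n + 1),
        C (qBinom q n k * c ^ (n - k) * (Bpoly q (n - k)).eval (a / c)) * qHermite q k := by
  simpa [AscAux.bB, mul_assoc] using AscAux.main q a c hc n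
end
end
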